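/- (Distribution- and hypothesis-specific critical sample size for symmetric learners.) Let a group G act on a set X, let ρ be a G-invariant probability measure on X, let A be a G-equivariant learner, and let h : X → {0,1} be a hypothesis. Let p = inf over g ∈ G with g·h ≠ h of P(h(X) ≠ (g·h)(X)) where X ~ ρ, and assume p > 0 and that there exists g ∈ G with g·h ≠ h. Then for any natural number n with n ≤ 1/(2p), when X_1,…,X_n are drawn i.i.d. from ρ and D_h = ((X_1,h(X_1)),…,(X_n,h(X_n))), the probability that A(D_h) ≠ h is at least 1/4. -/

import Mathlib

open MeasureTheory ENNReal

/-!
If `g • h ≠ h`, the labelled samples `D_h` and `D_{g • h}` coincide unless some sample point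
falls into the disagreement region `{h ≠ g • h}`, which by the union bound happens with
probability at most `n ρ {h ≠ g • h}`. On coinciding samples the learner is wrong about at least
one of `h` and `g • h`, and by equivariance of the learner and invariance of `ρ` it fails on
`g • h` exactly as often as on `h`. Hence `1 ≤ 2 P(fail) + n ρ {h ≠ g • h}` for every such `g`,
so `1 ≤ 2 P(fail) + n p ≤ 2 P(fail) + 1/2`.
-/

namespace MeasureTheory

variable {ι X : Type*} [Fintype ι] [MeasurableSpace X]

instance Measure.pi.smulInvariantMeasure {G : Type*} [Group G] [MulAction G X]
    [MeasurableConstSMul G X] (ρ : Measure X) [SigmaFinite ρ] [SMulInvariantMeasure G X ρ] :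
    SMulInvariantMeasure G (ι → X) (Measure.pi fun _ => ρ) :=
  ⟨fun c _ hs =>
    (measurePreserving_pi _ _ fun _ => measurePreserving_smul c ρ).measure_preimage
      hs.nullMeasurableSet⟩

theorem Measure.pi_eval_preimage (ρ : Measure X) [IsProbabilityMeasure ρ] (i : ι) (s : Set X) :
    Measure.pi (fun _ : ι => ρ) (Function.eval i ⁻¹' s) = ρ s := by
  classical
  rw [← Set.univ_pi_update_univ, Measure.pi_pi,
    Fintype.prod_eq_single i fun j hj => by simp [Function.update_of_ne hj]]
  simp

theorem Measure.pi_setOf_exists_mem_le (ρ : Measure X) [IsProbabilityMeasure ρ] (s : Set X) :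
    Measure.pi (fun _ : ι => ρ) {ω | ∃ i, ω i ∈ s} ≤ Fintype.card ι * ρ s := by
  have hunion : {ω : ι → X | ∃ i, ω i ∈ s} = ⋃ i, Function.eval i ⁻¹' s := by ext; simp
  calc Measure.pi (fun _ : ι => ρ) {ω | ∃ i, ω i ∈ s}
      ≤ ∑ i, Measure.pi (fun _ : ι => ρ) (Function.eval i ⁻¹' s) :=
        hunion ▸ measure_iUnion_fintype_le _ _
    _ = Fintype.card ι * ρ s := by simp [Measure.pi_eval_preimage]

end MeasureTheory

theorem ENNReal.le_add_mul_biInf {ι : Type*} {P : ι → Prop} {f : ι → ℝ≥0∞} {a b c : ℝ≥0∞}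
    (hP : ∃ i, P i) (hb : b ≠ ∞) (h : ∀ i, P i → c ≤ a + b * f i) :
    c ≤ a + b * ⨅ (i) (_ : P i), f i := by
  rcases eq_or_ne b 0 with rfl | hb0
  · obtain ⟨i, hi⟩ := hP
    simpa using h i hi
  simp only [ENNReal.mul_iInf_of_ne hb0 hb, ENNReal.add_iInf]
  exact le_iInf₂ h

section Learner

variable {ι X : Type*}

def labelSample (h : X → Bool) (ω : ι → X) : ι → X × Bool := fun i => (ω i, h (ω i))

def failureSet (A : (ι → X × Bool) → X → Bool) (h : X → Bool) : Set (ι → X) :=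
  {ω | A (labelSample h ω) ≠ h}

def IsEquivariantLearner (G : Type*) [Group G] [MulAction G X] (A : (ι → X × Bool) → X → Bool) :
    Prop :=
  ∀ (g : G) (D : ι → X × Bool), A (fun i => (g • (D i).1, (D i).2)) = fun x => A D (g⁻¹ • x)

theorem subset_failureSet_union_failureSet {h h' : X → Bool} (hne : h ≠ h')
    (A : (ι → X × Bool) → X → Bool) :
    {ω : ι → X | ∀ i, h (ω i) = h' (ω i)} ⊆ failureSet A h ∪ failureSet A h' := by
  intro ω hω
  by_contra hcon
  simp only [failureSet, Set.mem_union, Set.mem_ofPred_eq, not_or, not_not] at hcon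
  have hsample : labelSample h ω = labelSample h' ω := funext fun i => by simp [labelSample, hω i]
  exact hne (hcon.1.symm.trans (hsample ▸ hcon.2))

variable {G : Type*} [Group G] [MulAction G X] {A : (ι → X × Bool) → X → Bool}

theorem smul_preimage_failureSet (hA : IsEquivariantLearner G A) (g : G) (h : X → Bool) :
    (g • ·) ⁻¹' failureSet A (fun x => h (g⁻¹ • x)) = failureSet A h := by
  ext ω
  have hsample : labelSample (fun x => h (g⁻¹ • x)) (g • ω) =
      fun i => (g • (labelSample h ω i).1, (labelSample h ω i).2) := by
    funext i; simp [labelSample]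
  simp only [failureSet, Set.mem_preimage, Set.mem_ofPred_eq, hsample, hA g]
  exact ((MulAction.surjective g⁻¹).injective_comp_right).ne_iff

variable [Fintype ι] [MeasurableSpace X] [MeasurableConstSMul G X]

theorem pi_failureSet_smul (ρ : Measure X) [SigmaFinite ρ] [SMulInvariantMeasure G X ρ]
    (hA : IsEquivariantLearner G A) (g : G) (h : X → Bool) :
    Measure.pi (fun _ => ρ) (failureSet A fun x => h (g⁻¹ • x)) =
      Measure.pi (fun _ => ρ) (failureSet A h) := by
  rw [← smul_preimage_failureSet hA g h, measure_preimage_smul]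

theorem one_le_two_mul_pi_failureSet_add (ρ : Measure X) [IsProbabilityMeasure ρ]
    [SMulInvariantMeasure G X ρ] (hA : IsEquivariantLearner G A) {h : X → Bool} {g : G}
    (hg : (fun x => h (g⁻¹ • x)) ≠ h) :
    1 ≤ 2 * Measure.pi (fun _ => ρ) (failureSet A h) +
      Fintype.card ι * ρ {x | h x ≠ h (g⁻¹ • x)} := by
  set μ := Measure.pi fun _ : ι => ρ
  have hcover : Set.univ ⊆ (failureSet A h ∪ failureSet A fun x => h (g⁻¹ • x)) ∪
      {ω | ∃ i, ω i ∈ {x | h x ≠ h (g⁻¹ • x)}} := by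
    intro ω _
    by_cases hω : ∃ i, h (ω i) ≠ h (g⁻¹ • ω i)
    · exact Or.inr hω
    · push Not at hω
      exact Or.inl (subset_failureSet_union_failureSet hg.symm A hω)
  calc 1 = μ Set.univ := (measure_univ (μ := μ)).symm
    _ ≤ μ (failureSet A h) + μ (failureSet A fun x => h (g⁻¹ • x)) +
          μ {ω | ∃ i, ω i ∈ {x | h x ≠ h (g⁻¹ • x)}} :=
        (measure_mono hcover).trans <|
          (measure_union_le _ _).trans (add_le_add_left (measure_union_le _ _) _)
    _ ≤ 2 * μ (failureSet A h) + Fintype.card ι * ρ {x | h x ≠ h (g⁻¹ • x)} := by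
        rw [pi_failureSet_smul ρ hA g h, two_mul]
        exact add_le_add_right (Measure.pi_setOf_exists_mem_le ρ _) _

end Learner

theorem symmetric_learner_critical_sample_size_general
    {G X : Type*} [Group G] [MulAction G X] [MeasurableSpace X]
    (hmeas : ∀ g : G, Measurable fun x : X => g • x)
    (ρ : Measure X) [IsProbabilityMeasure ρ]
    (hinv : ∀ g : G, Measure.map (fun x : X => g • x) ρ = ρ)
    (n : ℕ) (A : (Fin n → X × Bool) → (X → Bool))
    (hequiv : ∀ (g : G) (D : Fin n → X × Bool),
      A (fun i => (g • (D i).1, (D i).2)) = fun x => A D (g⁻¹ • x))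
    (h : X → Bool)
    (hmoved : ∃ g : G, (fun x => h (g⁻¹ • x)) ≠ h)
    (p : ℝ≥0∞)
    (hp : p = ⨅ (g : G) (_ : (fun x => h (g⁻¹ • x)) ≠ h), ρ {x | h x ≠ h (g⁻¹ • x)})
    (hn : (n : ℝ≥0∞) ≤ 1 / (2 * p)) :
    (Measure.pi fun _ : Fin n => ρ) {ω | A (fun i => (ω i, h (ω i))) ≠ h} ≥ 1 / 4 := by
  have : MeasurableConstSMul G X := ⟨hmeas⟩
  have : SMulInvariantMeasure G X ρ := ((smulInvariantMeasure_tfae G ρ).out 5 0).mp hinv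
  set μF := Measure.pi (fun _ : Fin n => ρ) (failureSet A h)
  have hbound : 1 ≤ 2 * μF + n * p := by
    rw [hp]
    refine ENNReal.le_add_mul_biInf hmoved (natCast_ne_top n) fun g hg => ?_
    simpa only [Fintype.card_fin] using one_le_two_mul_pi_failureSet_add ρ hequiv hg
  have hnp : 2 * (n * p) ≤ 1 := by
    rwa [ENNReal.le_div_iff_mul_le (.inr one_ne_zero) (.inr one_ne_top), mul_left_comm] at hn
  have hμF : 1 ≤ μF * 4 := by
    refine ENNReal.le_of_add_le_add_right one_ne_top ?_
    calc 1 + 1 = 2 * 1 := by ring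
      _ ≤ 2 * (2 * μF + n * p) := by gcongr
      _ = μF * 4 + 2 * (n * p) := by ring
      _ ≤ μF * 4 + 1 := by gcongr
  exact ENNReal.div_le_of_le_mul hμF

/-- Distribution- and hypothesis-specific critical sample size for symmetric learners: if `A` is
a `G`-equivariant learner, `ρ` is `G`-invariant, `h` is a hypothesis moved by some `g ∈ G`
(where `(g·h)(x) = h(g⁻¹·x)`), and `p > 0` is the infimum over such `g` of the `ρ`-probability
that `h` and `g·h` disagree, then for any sample size `n ≤ 1/(2p)`, the learner `A` fails to
identify `h` with probability at least `1/4`. -/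
theorem symmetric_learner_critical_sample_size
    {G X : Type*} [Group G] [MulAction G X] [MeasurableSpace X]
    (hmeas : ∀ g : G, Measurable fun x : X => g • x)
    (ρ : Measure X) [IsProbabilityMeasure ρ]
    (hinv : ∀ g : G, Measure.map (fun x : X => g • x) ρ = ρ)
    (n : ℕ) (A : (Fin n → X × Bool) → (X → Bool))
    (hequiv : ∀ (g : G) (D : Fin n → X × Bool),
      A (fun i => (g • (D i).1, (D i).2)) = fun x => A D (g⁻¹ • x))
    (h : X → Bool)
    (hmoved : ∃ g : G, (fun x => h (g⁻¹ • x)) ≠ h)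
    (p : ℝ≥0∞)
    (hp : p = ⨅ (g : G) (_ : (fun x => h (g⁻¹ • x)) ≠ h), ρ {x | h x ≠ h (g⁻¹ • x)})
    (hp0 : 0 < p)
    (hn : (n : ℝ≥0∞) ≤ 1 / (2 * p)) :
    (Measure.pi fun _ : Fin n => ρ) {ω | A (fun i => (ω i, h (ω i))) ≠ h} ≥ 1 / 4 :=
  symmetric_learner_critical_sample_size_general hmeas ρ hinv n A hequiv h hmoved p hp hn
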